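/- arXiv:2501.02653 — 2 statements merged into one kernel-verified Lean document; each statement's English description precedes it below -/
import Mathlib

section
/- Let n, c, d be positive integers with d dividing n, let (X_1,…,X_d) be a partition of [n] into d blocks each of size n/d, and let (A_1,…,A_c) be an arbitrary partition of [n] into c parts. Let p be a multilinear polynomial over F2 in variables x_1,…,x_n that is set-multilinear over (A_1,…,A_c). Then there exist sets S_1 ⊆ X_1, …, S_d ⊆ X_d, each of size at least n/(cd), such that every monomial of p contains at most one variable whose index lies in S_i, for each i ∈ [d]. Consequently, for every restriction that fixes all variables with index outside S_1 ∪ … ∪ S_d to arbitrary Boolean values, the restricted polynomial is set-multilinear over the partition (S_1,…,S_d) of its remaining variables. -/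
/-!
Each block `X i` is covered by the `c` parts `A j`, so by pigeonhole some `A j` meets `X i` in at
least `|X i| / c = n / (c d)` indices; take `S i = X i ∩ A j`. A monomial meets `S i` in no more
variables than it meets `A j`. Restricting never creates new monomials: every monomial of the
restricted polynomial is the free part of a monomial of `p`, and Möbius inversion over `F₂` shows
that `anf` reads off exactly these coefficients.
-/

/-- Coefficient of the monomial `M` in the unique multilinear (ANF) representation of `f`. -/
def anf {ι : Type*} [Fintype ι] [DecidableEq ι] (f : (ι → ZMod 2) → ZMod 2) (M : Finset ι) :
    ZMod 2 :=
  ∑ T ∈ M.powerset, f (fun i => if i ∈ T then 1 else 0)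

/-- Evaluation of the multilinear polynomial with coefficient function `coeff`. -/
def evalPoly {n : ℕ} (coeff : Finset (Fin n) → ZMod 2) (x : Fin n → ZMod 2) : ZMod 2 :=
  ∑ M : Finset (Fin n), coeff M * ∏ j ∈ M, x j

open Finset

theorem Finset.exists_le_card_inter_of_subset_biUnion {α ι : Type*} [DecidableEq α] [Fintype ι]
    [Nonempty ι] {X : Finset α} {A : ι → Finset α} (hX : X ⊆ univ.biUnion A) :
    ∃ j, #X / Fintype.card ι ≤ #(X ∩ A j) := by
  have hcover : #X ≤ ∑ j, #(X ∩ A j) :=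
    calc #X = #(univ.biUnion fun j => X ∩ A j) := by
          rw [← inter_biUnion, inter_eq_left.mpr hX]
      _ ≤ ∑ j, #(X ∩ A j) := card_biUnion_le
  obtain ⟨j, -, hj⟩ := exists_le_of_sum_le (f := fun _ => #X / Fintype.card ι) univ_nonempty
    (by simpa [mul_comm] using (Nat.div_mul_le_self _ _).trans hcover)
  exact ⟨j, hj⟩

theorem Finset.cast_card_Icc_finset_zmod_two {ι : Type*} [DecidableEq ι] (N M : Finset ι) :
    (#(Icc N M) : ZMod 2) = if N = M then 1 else 0 := by
  by_cases hNM : N ⊆ M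
  · rw [card_Icc_finset hNM]
    split_ifs with hEq
    · simp [hEq]
    · have hpos : M.card - N.card ≠ 0 :=
        Nat.sub_ne_zero_of_lt (card_lt_card (lt_of_le_of_ne hNM hEq))
      rw [Nat.cast_pow, show ((2 : ℕ) : ZMod 2) = 0 from rfl, zero_pow hpos]
  · rw [Icc_eq_empty hNM, if_neg (by rintro rfl; exact hNM subset_rfl)]
    rfl

theorem anf_evalPoly {n : ℕ} (coeff : Finset (Fin n) → ZMod 2) (M : Finset (Fin n)) :
    anf (evalPoly coeff) M = coeff M := by
  have hcount : ∀ N : Finset (Fin n),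
      ∑ T ∈ M.powerset, (if N ⊆ T then (1 : ZMod 2) else 0) = if N = M then 1 else 0 := by
    intro N
    rw [sum_boole, ← Icc_eq_filter_powerset, cast_card_Icc_finset_zmod_two]
  calc anf (evalPoly coeff) M
      = ∑ T ∈ M.powerset, ∑ N, coeff N * if N ⊆ T then 1 else 0 := by
        simp only [anf, evalPoly, prod_boole]
        rfl
    _ = ∑ N, coeff N * if N = M then 1 else 0 := by
        rw [sum_comm]
        simp only [← mul_sum, hcount]
    _ = coeff M := by simp

/-- The coefficients of `p` after the variables outside `P` are fixed to the values `u`. -/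
def restrictCoeff {n : ℕ} (coeff : Finset (Fin n) → ZMod 2) (P : Fin n → Prop) [DecidablePred P]
    (u : Fin n → ZMod 2) (N : Finset (Fin n)) : ZMod 2 :=
  ∑ M with M.filter P = N, coeff M * ∏ j ∈ M.filter (¬ P ·), u j

theorem evalPoly_restrict {n : ℕ} (coeff : Finset (Fin n) → ZMod 2) (P : Fin n → Prop)
    [DecidablePred P] (u x : Fin n → ZMod 2) :
    evalPoly coeff (fun j => if P j then x j else u j) = evalPoly (restrictCoeff coeff P u) x := by
  unfold evalPoly restrictCoeff
  rw [← sum_fiberwise univ (fun M => M.filter P)]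
  refine sum_congr rfl fun N _ => ?_
  rw [sum_mul]
  refine sum_congr rfl fun M hM => ?_
  rw [prod_ite, (mem_filter.mp hM).2]
  ring

theorem exists_superset_of_anf_restrict_ne_zero {n : ℕ} {coeff : Finset (Fin n) → ZMod 2}
    {P : Fin n → Prop} [DecidablePred P] {u : Fin n → ZMod 2} {N : Finset (Fin n)}
    (hN : anf (fun x => evalPoly coeff (fun j => if P j then x j else u j)) N ≠ 0) :
    ∃ M, coeff M ≠ 0 ∧ N ⊆ M := by
  simp only [evalPoly_restrict, anf_evalPoly, restrictCoeff] at hN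
  obtain ⟨M, hMN, hM⟩ := exists_ne_zero_of_sum_ne_zero hN
  refine ⟨M, left_ne_zero_of_mul hM, ?_⟩
  rw [← (mem_filter.mp hMN).2]
  exact filter_subset _ _

theorem stmt2_general
    (n c d : ℕ) (hc : 0 < c)
    (X : Fin d → Finset (Fin n))
    (hXcard : ∀ i, (X i).card = n / d)
    (A : Fin c → Finset (Fin n))
    (hAcover : Finset.univ.biUnion A = Finset.univ)
    (coeff : Finset (Fin n) → ZMod 2)
    (hsml : ∀ M, coeff M ≠ 0 → ∀ j, (M ∩ A j).card ≤ 1) :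
    ∃ S : Fin d → Finset (Fin n),
      (∀ i, S i ⊆ X i) ∧
      (∀ i, n / (c * d) ≤ (S i).card) ∧
      (∀ M, coeff M ≠ 0 → ∀ i, (M ∩ S i).card ≤ 1) ∧
      (∀ u : Fin n → ZMod 2, ∀ M : Finset (Fin n),
        anf (fun x => evalPoly coeff (fun j => if ∃ i, j ∈ S i then x j else u j)) M ≠ 0 →
        ∀ i, (M ∩ S i).card ≤ 1) := by
  have : Nonempty (Fin c) := ⟨⟨0, hc⟩⟩
  choose part hpart using fun i =>
    exists_le_card_inter_of_subset_biUnion (X := X i) (hAcover ▸ subset_univ _)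
  have hS : ∀ M, coeff M ≠ 0 → ∀ i, #(M ∩ (X i ∩ A (part i))) ≤ 1 := fun M hM i =>
    (card_le_card (inter_subset_inter_left inter_subset_right)).trans (hsml M hM (part i))
  refine ⟨fun i => X i ∩ A (part i), fun i => inter_subset_left, fun i => ?_, hS, ?_⟩
  · simpa [hXcard, Nat.div_div_eq_div_mul, mul_comm d] using hpart i
  · intro u N hN i
    obtain ⟨M, hM, hNM⟩ := exists_superset_of_anf_restrict_ne_zero hN
    exact (card_le_card (inter_subset_inter_right hNM)).trans (hS M hM i)

theorem stmt2
    (n c d : ℕ) (hn : 0 < n) (hc : 0 < c) (hd : 0 < d) (hdvd : d ∣ n)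
    (X : Fin d → Finset (Fin n))
    (hXdisj : ∀ i j, i ≠ j → Disjoint (X i) (X j))
    (hXcover : Finset.univ.biUnion X = Finset.univ)
    (hXcard : ∀ i, (X i).card = n / d)
    (A : Fin c → Finset (Fin n))
    (hAdisj : ∀ i j, i ≠ j → Disjoint (A i) (A j))
    (hAcover : Finset.univ.biUnion A = Finset.univ)
    (coeff : Finset (Fin n) → ZMod 2)
    (hsml : ∀ M, coeff M ≠ 0 → ∀ j, (M ∩ A j).card ≤ 1) :
    ∃ S : Fin d → Finset (Fin n),
      (∀ i, S i ⊆ X i) ∧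
      (∀ i, n / (c * d) ≤ (S i).card) ∧
      (∀ M, coeff M ≠ 0 → ∀ i, (M ∩ S i).card ≤ 1) ∧
      (∀ u : Fin n → ZMod 2, ∀ M : Finset (Fin n),
        anf (fun x => evalPoly coeff (fun j => if ∃ i, j ∈ S i then x j else u j)) M ≠ 0 →
        ∀ i, (M ∩ S i).card ≤ 1) :=
  stmt2_general n c d hc X hXcard A hAcover coeff hsml
end

section
/- Let N, a, m, k' be positive integers, ε' ≥ 0, let Ext: {0,1}^N → {0,1}^a be a (k',ε') oblivious bit-fixing extractor, and let f: ({0,1}^a)^m → {0,1}. Let ρ ∈ {0,1,⋆}^{mN} be a restriction (on m blocks of N coordinates each) leaving at least k' coordinates free within each of the m blocks. Define (f∘Ext^m)|_ρ: ({0,1}^N)^m → {0,1} by (f∘Ext^m)|_ρ(X_1,…,X_m) = f(Ext(Y_1),…,Ext(Y_m)), where Y_i ∈ {0,1}^N agrees with ρ on the fixed coordinates of block i and with X_i on the free coordinates. Then R_m((f∘Ext^m)|_ρ) ≤ R_m(f) + 4·m·ε', where on the left R_m is the m-party norm with respect to blocks {0,1}^N and on the right it is the m-party norm of f with respect to blocks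 {0,1}^a. -/
/-- `(-1)^v` for a bit `v : ZMod 2`. -/
noncomputable def pm1 (v : ZMod 2) : ℝ := if v = 1 then -1 else 1

/-- Two distributions are `ε`-close: all events get probabilities within `ε`. -/
def CloseTo {α : Type*} [Fintype α] (p q : α → ℝ) (ε : ℝ) : Prop :=
  ∀ S : Finset α, |∑ x ∈ S, p x - ∑ x ∈ S, q x| ≤ ε

/-- Pushforward of a distribution along a map. -/
noncomputable def push {α β : Type*} [Fintype α] [DecidableEq β] (h : α → β) (p : α → ℝ) :
    β → ℝ :=
  fun y => ∑ x : α, if h x = y then p x else 0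

/-- The uniform distribution on a finite type. -/
noncomputable def unif (α : Type*) [Fintype α] : α → ℝ := fun _ => (Fintype.card α : ℝ)⁻¹

/-- Fill the free (`none`) coordinates of a restriction `σ` using `x`. -/
def fill {N : ℕ} (σ : Fin N → Option (ZMod 2)) (x : Fin N → ZMod 2) : Fin N → ZMod 2 :=
  fun j => (σ j).getD (x j)

/-- `Ext` is a `(k', ε')` oblivious bit-fixing source extractor. -/
def OBFExtractor {N a : ℕ} (Ext : (Fin N → ZMod 2) → (Fin a → ZMod 2))
    (k' : ℕ) (ε' : ℝ) : Prop :=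
  ∀ σ : Fin N → Option (ZMod 2),
    k' ≤ (Finset.univ.filter (fun j => σ j = none)).card →
    CloseTo (push (fun x => Ext (fill σ x)) (unif (Fin N → ZMod 2)))
      (unif (Fin a → ZMod 2)) ε'

/-- The `m`-party norm of `g : ({0,1}^b)^m → {0,1}`. -/
noncomputable def partyNorm (m b : ℕ) (g : (Fin m → (Fin b → ZMod 2)) → ZMod 2) : ℝ :=
  (∑ X0 : Fin m → Fin b → ZMod 2, ∑ X1 : Fin m → Fin b → ZMod 2,
      pm1 (∑ δ : Fin m → Bool, g (fun i => if δ i then X1 i else X0 i))) /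
    ((Fintype.card (Fin m → Fin b → ZMod 2) : ℝ)) ^ 2

/-!
Both norms are expectations of the same function `F Z = pm1 (∑ δ, f (fun i => Z (i, δ i)))`,
`|F| ≤ 1`, of `2m` independent blocks `Z (i, b) ∈ {0,1}^a`. For `f` the blocks are uniform; for
the restricted composition the block `(i, b)` is distributed as `Ext` of a uniform source fixed
according to `ρ i`, which is `ε'`-close to uniform, i.e. at `ℓ₁`-distance at most `2ε'` from it.
Telescoping over the factors, the `ℓ₁`-distance of two product distributions is at most the sum
of the factorwise distances, so the two expectations differ by at most `2m · 2ε'`.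
-/

noncomputable def piDist {ι α : Type*} [Fintype ι] (p : ι → α → ℝ) : (ι → α) → ℝ :=
  fun Z => ∏ c, p c (Z c)

lemma unif_nonneg (α : Type*) [Fintype α] (x : α) : 0 ≤ unif α x := by
  unfold unif; positivity

lemma sum_unif (α : Type*) [Fintype α] [Nonempty α] : ∑ x : α, unif α x = 1 := by
  simp [unif]

section Push

variable {α β : Type*} [Fintype α] [DecidableEq β]

lemma push_nonneg (h : α → β) {p : α → ℝ} (hp : ∀ x, 0 ≤ p x) (y : β) : 0 ≤ push h p y :=
  Finset.sum_nonneg fun x _ => by split_ifs <;> simp [hp x]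

lemma sum_push_mul [Fintype β] (h : α → β) (p : α → ℝ) (F : β → ℝ) :
    ∑ y, push h p y * F y = ∑ x, p x * F (h x) := by
  simp only [push, Finset.sum_mul, ite_mul, zero_mul]
  rw [Finset.sum_comm]
  simp

lemma sum_push [Fintype β] (h : α → β) (p : α → ℝ) : ∑ y, push h p y = ∑ x, p x := by
  simpa using sum_push_mul h p 1

end Push

lemma CloseTo.sum_abs_sub_le {α : Type*} [Fintype α] {p q : α → ℝ} {ε : ℝ}
    (h : CloseTo p q ε) : ∑ x, |p x - q x| ≤ 2 * ε := by
  classical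
  have hle := h {x | q x ≤ p x}
  have hgt := h {x | ¬q x ≤ p x}
  calc ∑ x, |p x - q x|
      = ∑ x with q x ≤ p x, (p x - q x) + ∑ x with ¬q x ≤ p x, -(p x - q x) := by
        rw [← Finset.sum_ite]
        refine Finset.sum_congr rfl fun x _ => ?_
        split_ifs with hx
        · exact abs_of_nonneg (sub_nonneg.2 hx)
        · exact abs_of_neg (sub_neg.2 (not_le.1 hx))
    _ ≤ ε + ε := by
        rw [Finset.sum_neg_distrib, Finset.sum_sub_distrib, Finset.sum_sub_distrib]
        exact add_le_add ((le_abs_self _).trans hle) ((neg_le_abs _).trans hgt)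
    _ = 2 * ε := by ring

lemma abs_sum_mul_sub_sum_mul_le {α : Type*} [Fintype α] (p q F : α → ℝ)
    (hF : ∀ x, |F x| ≤ 1) : |∑ x, p x * F x - ∑ x, q x * F x| ≤ ∑ x, |p x - q x| := by
  rw [← Finset.sum_sub_distrib]
  refine (Finset.abs_sum_le_sum_abs _ _).trans (Finset.sum_le_sum fun x _ => ?_)
  rw [← sub_mul, abs_mul]
  exact mul_le_of_le_one_right (abs_nonneg _) (hF x)

lemma abs_prod_sub_prod_le {ι : Type*} [LinearOrder ι] (s : Finset ι) {a b : ι → ℝ}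
    (ha : ∀ i, 0 ≤ a i) (hb : ∀ i, 0 ≤ b i) :
    |∏ i ∈ s, a i - ∏ i ∈ s, b i|
      ≤ ∑ i ∈ s, |a i - b i| * (∏ j ∈ s with j < i, a j) * ∏ j ∈ s with i < j, b j := by
  have htel := Finset.prod_add_ordered s b (a - b)
  simp only [Pi.sub_apply, add_sub_cancel] at htel
  rw [htel, add_sub_cancel_left]
  refine (Finset.abs_sum_le_sum_abs _ _).trans (Finset.sum_le_sum fun i _ => ?_)
  rw [abs_mul, abs_mul, abs_of_nonneg (Finset.prod_nonneg fun j _ => ha j),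
    abs_of_nonneg (Finset.prod_nonneg fun j _ => hb j)]

section PiDist

variable {ι α : Type*} [Fintype ι] [Fintype α]

lemma sum_piDist [DecidableEq ι] (p : ι → α → ℝ) : ∑ Z, piDist p Z = ∏ c, ∑ x, p c x := by
  classical
  exact (Fintype.prod_sum p).symm

lemma piDist_const_unif [DecidableEq ι] : piDist (fun _ : ι => unif α) = unif (ι → α) := by
  funext Z
  simp [piDist, unif, Finset.prod_const]

lemma push_piDist [DecidableEq ι] {β : Type*} [DecidableEq β] (h : ι → α → β) (p : ι → α → ℝ) :
    push (fun W c => h c (W c)) (piDist p) = piDist fun c => push (h c) (p c) := by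
  classical
  funext Z
  simp only [push, piDist, Fintype.prod_sum]
  refine Finset.sum_congr rfl fun W _ => ?_
  rw [Finset.prod_ite_zero]
  simp [funext_iff]

lemma sum_abs_piDist_sub_le_of_linearOrder [LinearOrder ι] {p q : ι → α → ℝ}
    (hp : ∀ c x, 0 ≤ p c x) (hq : ∀ c x, 0 ≤ q c x)
    (hp₁ : ∀ c, ∑ x, p c x = 1) (hq₁ : ∀ c, ∑ x, q c x = 1) :
    ∑ Z, |piDist p Z - piDist q Z| ≤ ∑ c, ∑ x, |p c x - q c x| := by
  -- `piDist (r i)` is the `i`-th term of the telescoping sum for `∏ p - ∏ q`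
  let r (i j : ι) (x : α) : ℝ :=
    if j < i then p j x else if j = i then |p j x - q j x| else q j x
  have hr (i : ι) (Z : ι → α) : |p i (Z i) - q i (Z i)| * (∏ j with j < i, p j (Z j))
      * ∏ j with i < j, q j (Z j) = piDist (r i) Z := by
    have hi := Finset.prod_ite_eq' Finset.univ i fun j => |p j (Z j) - q j (Z j)|
    rw [if_pos (Finset.mem_univ i)] at hi
    rw [Finset.prod_filter, Finset.prod_filter, piDist, ← hi,
      ← Finset.prod_mul_distrib, ← Finset.prod_mul_distrib]
    refine Finset.prod_congr rfl fun j _ => ?_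
    rcases lt_trichotomy j i with hji | rfl | hij
    · simp [r, hji, hji.ne, hji.not_gt]
    · simp [r]
    · simp [r, hij.ne', hij.not_gt, hij]
  have hr₁ (i j : ι) : ∑ x, r i j x = if j = i then ∑ x, |p i x - q i x| else 1 := by
    rcases lt_trichotomy j i with hji | rfl | hij
    · simp [r, hji, hji.ne, hp₁]
    · simp [r]
    · simp [r, hij.ne', hij.not_gt, hq₁]
  calc ∑ Z, |piDist p Z - piDist q Z|
      ≤ ∑ Z : ι → α, ∑ i, |p i (Z i) - q i (Z i)| * (∏ j with j < i, p j (Z j))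
          * ∏ j with i < j, q j (Z j) :=
        Finset.sum_le_sum fun Z _ =>
          abs_prod_sub_prod_le _ (fun j => hp j (Z j)) fun j => hq j (Z j)
    _ = ∑ i, ∑ x, |p i x - q i x| := by
        simp only [hr]
        rw [Finset.sum_comm]
        simp [sum_piDist, hr₁]

lemma sum_abs_piDist_sub_le [DecidableEq ι] {p q : ι → α → ℝ}
    (hp : ∀ c x, 0 ≤ p c x) (hq : ∀ c x, 0 ≤ q c x)
    (hp₁ : ∀ c, ∑ x, p c x = 1) (hq₁ : ∀ c, ∑ x, q c x = 1) :
    ∑ Z, |piDist p Z - piDist q Z| ≤ ∑ c, ∑ x, |p c x - q c x| := by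
  let _ : LinearOrder ι := LinearOrder.lift' _ (Fintype.equivFin ι).injective
  convert sum_abs_piDist_sub_le_of_linearOrder hp hq hp₁ hq₁

end PiDist

def prodBoolArrowEquiv (α β : Type*) : (α × Bool → β) ≃ (α → β) × (α → β) where
  toFun W := (fun i => W (i, false), fun i => W (i, true))
  invFun X c := if c.2 then X.2 c.1 else X.1 c.1
  left_inv W := by funext ⟨i, b⟩; cases b <;> rfl
  right_inv X := rfl

lemma partyNorm_eq_sum_unif (m b : ℕ) (g : (Fin m → Fin b → ZMod 2) → ZMod 2) :
    partyNorm m b g = ∑ W : Fin m × Bool → Fin b → ZMod 2,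
      unif _ W * pm1 (∑ δ : Fin m → Bool, g fun i => W (i, δ i)) := by
  simp only [partyNorm, div_eq_inv_mul, unif]
  rw [← Finset.mul_sum, Fintype.card_congr (prodBoolArrowEquiv _ _), Fintype.card_prod, ← sq,
    ← (prodBoolArrowEquiv _ _).symm.sum_comp, Fintype.sum_prod_type, Nat.cast_pow]
  rfl

lemma abs_pm1_le_one (v : ZMod 2) : |pm1 v| ≤ 1 := by
  unfold pm1; split_ifs <;> norm_num

theorem stmt4_general
    (N a m k' : ℕ)
    (ε' : ℝ)
    (Ext : (Fin N → ZMod 2) → (Fin a → ZMod 2)) (hExt : OBFExtractor Ext k' ε')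
    (f : (Fin m → (Fin a → ZMod 2)) → ZMod 2)
    (ρ : Fin m → Fin N → Option (ZMod 2))
    (hρ : ∀ i, k' ≤ (Finset.univ.filter (fun j => ρ i j = none)).card) :
    partyNorm m N (fun X => f (fun i => Ext (fill (ρ i) (X i))))
      ≤ partyNorm m a f + 4 * m * ε' := by
  let F (Z : Fin m × Bool → Fin a → ZMod 2) : ℝ := pm1 (∑ δ : Fin m → Bool, f fun i => Z (i, δ i))
  let P (c : Fin m × Bool) := push (fun x => Ext (fill (ρ c.1) x)) (unif (Fin N → ZMod 2))
  let U (_ : Fin m × Bool) := unif (Fin a → ZMod 2)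
  have hlhs : partyNorm m N (fun X => f fun i => Ext (fill (ρ i) (X i)))
      = ∑ Z, piDist P Z * F Z := by
    rw [partyNorm_eq_sum_unif, ← piDist_const_unif, ← push_piDist, sum_push_mul]
  have hrhs : partyNorm m a f = ∑ Z, piDist U Z * F Z := by
    rw [partyNorm_eq_sum_unif, piDist_const_unif]
  have hP (c) : ∑ x, |P c x - U c x| ≤ 2 * ε' := (hExt _ (hρ c.1)).sum_abs_sub_le
  have hdist : |∑ Z, piDist P Z * F Z - ∑ Z, piDist U Z * F Z| ≤ ∑ c, ∑ x, |P c x - U c x| :=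
    (abs_sum_mul_sub_sum_mul_le _ _ F fun _ => abs_pm1_le_one _).trans
      (sum_abs_piDist_sub_le (fun _ => push_nonneg _ (unif_nonneg _))
        (fun _ => unif_nonneg (Fin a → ZMod 2)) (fun _ => (sum_push _ _).trans (sum_unif _))
        fun _ => sum_unif _)
  calc partyNorm m N (fun X => f fun i => Ext (fill (ρ i) (X i)))
      ≤ partyNorm m a f + ∑ c, ∑ x, |P c x - U c x| := by
        rw [hlhs, hrhs]; linarith [le_abs_self (∑ Z, piDist P Z * F Z - ∑ Z, piDist U Z * F Z)]
    _ ≤ partyNorm m a f + ∑ _c : Fin m × Bool, 2 * ε' := by gcongr with c; exact hP c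
    _ = partyNorm m a f + 4 * m * ε' := by
        simp only [Finset.sum_const, Finset.card_univ, Fintype.card_prod, Fintype.card_fin,
          Fintype.card_bool, nsmul_eq_mul, Nat.cast_mul, Nat.cast_ofNat]
        ring

theorem stmt4
    (N a m k' : ℕ) (hN : 0 < N) (ha : 0 < a) (hm : 0 < m) (hk' : 0 < k')
    (ε' : ℝ) (hε' : 0 ≤ ε')
    (Ext : (Fin N → ZMod 2) → (Fin a → ZMod 2)) (hExt : OBFExtractor Ext k' ε')
    (f : (Fin m → (Fin a → ZMod 2)) → ZMod 2)
    (ρ : Fin m → Fin N → Option (ZMod 2))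
    (hρ : ∀ i, k' ≤ (Finset.univ.filter (fun j => ρ i j = none)).card) :
    partyNorm m N (fun X => f (fun i => Ext (fill (ρ i) (X i))))
      ≤ partyNorm m a f + 4 * m * ε' :=
  stmt4_general N a m k' ε' Ext hExt f ρ hρ
end
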